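/- arXiv:2203.05774 — 3 statements merged into one kernel-verified Lean document; each statement's English description precedes it below -/
import Mathlib

section
/- Let X and S be real symmetric positive semi-definite n×n matrices. Then the matrix I + S·X is invertible and ‖X·(I + S·X)^{-1}‖ ≤ ‖X‖, where ‖·‖ is the spectral norm. -/
open Matrix

/-- The spectral norm (operator 2-norm) of a real matrix. -/
noncomputable def specNorm {m n : ℕ} (M : Matrix (Fin m) (Fin n) ℝ) : ℝ :=
  ‖LinearMap.toContinuousLinearMap (Matrix.toEuclideanLin M)‖

/-! With `M = X (I + S X)⁻¹`, the identities `(I + X S) M = X = M (I + S X)` show that `M` is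
symmetric and that
`M = (I + S X)⁻ᵀ X (I + S X)⁻¹ + Mᵀ S M` and `X - M = Mᵀ S M + (S M)ᵀ X (S M)`.
Hence `0 ≤ M ≤ X` in the Loewner order, and the spectral norm, being the supremum of the
Rayleigh quotient, is monotone on positive operators. `I + S X` is invertible because writing
`X = Bᵀ B` gives `det (I + S X) = det (I + B S Bᵀ) > 0`. -/

open scoped MatrixOrder ComplexOrder

section OneAddMul

variable {R : Type*} [Ring R] [StarRing R] {x s b : R}

theorem IsSelfAdjoint.star_one_add_mul (hx : IsSelfAdjoint x) (hs : IsSelfAdjoint s) :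
    star (1 + s * x) = 1 + x * s := by
  rw [star_add, star_one, star_mul, hx.star_eq, hs.star_eq]

theorem star_one_add_mul_mul_mul_eq_of_mul_eq_one (hx : IsSelfAdjoint x) (hs : IsSelfAdjoint s)
    (hb : (1 + s * x) * b = 1) : star (1 + s * x) * (x * b) = x :=
  calc star (1 + s * x) * (x * b) = x * ((1 + s * x) * b) := by
        rw [hx.star_one_add_mul hs]; noncomm_ring
    _ = x := by rw [hb, mul_one]

theorem isSelfAdjoint_mul_of_one_add_mul_mul_eq_one (hx : IsSelfAdjoint x) (hs : IsSelfAdjoint s)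
    (hb : (1 + s * x) * b = 1) : IsSelfAdjoint (x * b) := by
  have h := star_one_add_mul_mul_mul_eq_of_mul_eq_one hx hs hb
  calc star (x * b) = star b * x := by rw [star_mul, hx.star_eq]
    _ = star ((1 + s * x) * b) * (x * b) := by rw [star_mul, mul_assoc, h]
    _ = x * b := by rw [hb, star_one, one_mul]

variable [PartialOrder R] [StarOrderedRing R]

theorem mul_nonneg_of_one_add_mul_mul_eq_one (hx : 0 ≤ x) (hs : 0 ≤ s)
    (hb : (1 + s * x) * b = 1) : 0 ≤ x * b := by
  have hx' := IsSelfAdjoint.of_nonneg hx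
  have hm := isSelfAdjoint_mul_of_one_add_mul_mul_eq_one hx' (.of_nonneg hs) hb
  have key : x * b = star b * x * b + star (x * b) * s * (x * b) :=
    calc x * b = star (x * b) * ((1 + s * x) * b) := by rw [hb, mul_one, hm.star_eq]
      _ = _ := by rw [star_mul, hx'.star_eq]; noncomm_ring
  rw [key]
  exact add_nonneg (star_left_conjugate_nonneg hx b) (star_left_conjugate_nonneg hs _)

theorem mul_le_of_one_add_mul_mul_eq_one (hx : 0 ≤ x) (hs : 0 ≤ s)
    (hb : (1 + s * x) * b = 1) : x * b ≤ x := by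
  have hx' := IsSelfAdjoint.of_nonneg hx
  have hs' := IsSelfAdjoint.of_nonneg hs
  have h := star_one_add_mul_mul_mul_eq_of_mul_eq_one hx' hs' hb
  have hstar : star (x * b) * (1 + s * x) = x := by
    simpa only [star_mul, star_star, hx'.star_eq] using congrArg star h
  have key : x - x * b = star (x * b) * s * (x * b) + star (s * (x * b)) * x * (s * (x * b)) :=
    calc x - x * b = star (1 + s * x) * (x * b) - x * b := by rw [h]
      _ = x * s * (x * b) := by rw [hx'.star_one_add_mul hs']; noncomm_ring
      _ = star (x * b) * (1 + s * x) * s * (x * b) := by rw [hstar]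
      _ = _ := by rw [star_mul s, hs'.star_eq]; noncomm_ring
  rw [← sub_nonneg, key]
  exact add_nonneg (star_left_conjugate_nonneg hs _) (star_left_conjugate_nonneg hx _)

end OneAddMul

namespace ContinuousLinearMap

variable {𝕜 E : Type*} [RCLike 𝕜] [NormedAddCommGroup E] [InnerProductSpace 𝕜 E]

theorem norm_le_norm_of_nonneg_of_le {T U : E →L[𝕜] E} (hT : 0 ≤ T) (hTU : T ≤ U) :
    ‖T‖ ≤ ‖U‖ := by
  rw [nonneg_iff_isPositive] at hT
  rw [le_def] at hTU
  rw [norm_eq_iSup_rayleighQuotient T hT.isSymmetric]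
  refine ciSup_le fun x => ?_
  have hTx : 0 ≤ T.rayleighQuotient x :=
    div_nonneg (hT.re_inner_nonneg_left x) (by positivity)
  have hTUx : T.rayleighQuotient x ≤ U.rayleighQuotient x := by
    have h := hTU.re_inner_nonneg_left x
    rw [_root_.sub_apply, inner_sub_left, map_sub, sub_nonneg] at h
    exact div_le_div_of_nonneg_right h (by positivity)
  calc |T.rayleighQuotient x| = T.rayleighQuotient x := abs_of_nonneg hTx
    _ ≤ |U.rayleighQuotient x| := hTUx.trans (le_abs_self _)
    _ ≤ ‖U‖ := U.rayleighQuotient_le_norm x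

end ContinuousLinearMap

namespace Matrix

variable {𝕜 n : Type*} [RCLike 𝕜] [Fintype n] [DecidableEq n]

theorem toEuclideanCLM_nonneg_iff {A : Matrix n n 𝕜} :
    0 ≤ toEuclideanCLM (𝕜 := 𝕜) A ↔ 0 ≤ A := by
  rw [ContinuousLinearMap.nonneg_iff_isPositive, nonneg_iff_posSemidef,
    ← isPositive_toEuclideanLin_iff, ← LinearMap.isPositive_toContinuousLinearMap_iff]
  rfl

theorem toEuclideanCLM_le_toEuclideanCLM_iff {A B : Matrix n n 𝕜} :
    toEuclideanCLM (𝕜 := 𝕜) A ≤ toEuclideanCLM (𝕜 := 𝕜) B ↔ A ≤ B := by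
  rw [ContinuousLinearMap.le_def, ← map_sub, ← ContinuousLinearMap.nonneg_iff_isPositive,
    toEuclideanCLM_nonneg_iff, sub_nonneg]

theorem isUnit_one_add_mul_of_posSemidef {S X : Matrix n n 𝕜} (hS : S.PosSemidef)
    (hX : X.PosSemidef) : IsUnit (1 + S * X) := by
  obtain ⟨B, rfl⟩ := CStarAlgebra.nonneg_iff_eq_star_mul_self.mp hX.nonneg
  have hpos : (1 + B * S * star B).PosDef :=
    PosDef.one.add_posSemidef (hS.mul_mul_conjTranspose_same B)
  rw [isUnit_iff_isUnit_det, ← mul_assoc, det_one_add_mul_comm, ← mul_assoc,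
    ← isUnit_iff_isUnit_det]
  exact hpos.isUnit

end Matrix

theorem specNorm_le_specNorm_of_nonneg_of_le {n : ℕ} {A B : Matrix (Fin n) (Fin n) ℝ}
    (hA : 0 ≤ A) (hAB : A ≤ B) : specNorm A ≤ specNorm B :=
  ContinuousLinearMap.norm_le_norm_of_nonneg_of_le (toEuclideanCLM_nonneg_iff.mpr hA)
    (toEuclideanCLM_le_toEuclideanCLM_iff.mpr hAB)

/-- If `X` and `S` are real symmetric positive semi-definite `n×n` matrices, then `I + S·X`
is invertible and `‖X·(I + S·X)⁻¹‖ ≤ ‖X‖` in the spectral norm. -/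
theorem specNorm_mul_inv_one_add_le {n : ℕ} (X S : Matrix (Fin n) (Fin n) ℝ)
    (hX : X.PosSemidef) (hS : S.PosSemidef) :
    IsUnit ((1 : Matrix (Fin n) (Fin n) ℝ) + S * X) ∧
      specNorm (X * ((1 : Matrix (Fin n) (Fin n) ℝ) + S * X)⁻¹) ≤ specNorm X := by
  have hunit := isUnit_one_add_mul_of_posSemidef hS hX
  have hinv : (1 + S * X) * (1 + S * X)⁻¹ = 1 :=
    mul_nonsing_inv _ ((isUnit_iff_isUnit_det _).mp hunit)
  exact ⟨hunit, specNorm_le_specNorm_of_nonneg_of_le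
    (mul_nonneg_of_one_add_mul_mul_eq_one hX.nonneg hS.nonneg hinv)
    (mul_le_of_one_add_mul_mul_eq_one hX.nonneg hS.nonneg hinv)⟩
end

section
/- Let A ∈ ℝ^{n×n}, B ∈ ℝ^{n×m}, let γ ∈ (0,1], let E₁, E₂ ∈ ℝ^{m×m} be symmetric positive definite, and let P₁, P₂ ∈ ℝ^{n×n} be symmetric positive semi-definite. For i = 1,2 define K_i = −γ·(E_i + γ·Bᵀ·P_i·B)^{-1}·Bᵀ·P_i·A, so that for each fixed x the vector K_i·x minimizes u ↦ (1/2)·uᵀE_i u + (γ/2)·(Ax + Bu)ᵀ P_i (Ax + Bu) over u ∈ ℝ^m. Suppose ‖E₁ − E₂‖ ≤ ε with ε ≤ λ_min(E₁)/2, and suppose ‖P₁ − P₂‖ ≤ δ. Then ‖K₁ − K₂‖ ≤ (2γ/λ_min(E₁))·max{‖A‖, ‖B‖}²·(‖K₁‖ + 1)·δ + (2/λ_min(E₁))·‖K₁‖·ε. -/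
/-!
Write `Gᵢ = Eᵢ + γ Bᵀ Pᵢ B`, so that `Gᵢ Kᵢ = -γ Bᵀ Pᵢ A`. Subtracting the two normal equations
gives `G₂ (K₁ - K₂) = (E₂ - E₁) K₁ + γ Bᵀ (P₂ - P₁) (A + B K₁)`. Since
`‖E₁ - E₂‖ ≤ ε ≤ λ_min(E₁)/2` and `γ Bᵀ P₂ B ⪰ 0`, the quadratic form of `G₂` is bounded below
by `λ_min(E₁)/2`, hence `‖G₂⁻¹‖ ≤ 2/λ_min(E₁)`; submultiplicativity of the spectral norm does
the rest.
-/

open Matrix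

/-- The smallest eigenvalue of a real symmetric matrix (infimum of its real spectrum). -/
noncomputable def lamMin {n : ℕ} (M : Matrix (Fin n) (Fin n) ℝ) : ℝ :=
  sInf (spectrum ℝ M)

open scoped Matrix.Norms.L2Operator RealInnerProductSpace MatrixOrder

theorem specNorm_eq_norm {m n : ℕ} (M : Matrix (Fin m) (Fin n) ℝ) : specNorm M = ‖M‖ := rfl

theorem mul_add_mul_le_max_sq_mul {a b k : ℝ} (ha : 0 ≤ a) (hb : 0 ≤ b) (hk : 0 ≤ k) :
    b * (a + b * k) ≤ max a b ^ 2 * (k + 1) := by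
  have hba : b * a ≤ max a b ^ 2 := by
    rw [sq]
    exact mul_le_mul (le_max_right a b) (le_max_left a b) ha (hb.trans (le_max_right a b))
  have hbb : b * b ≤ max a b ^ 2 := by
    rw [sq]
    exact mul_self_le_mul_self hb (le_max_right a b)
  nlinarith

theorem EuclideanSpace.norm_sq_eq_dotProduct {ι : Type*} [Fintype ι] (x : EuclideanSpace ℝ ι) :
    ‖x‖ ^ 2 = x.ofLp ⬝ᵥ x.ofLp := by
  rw [← real_inner_self_eq_norm_sq, EuclideanSpace.inner_eq_star_dotProduct, star_trivial]

namespace Matrix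

section FeedbackGain

variable {R ι κ : Type*} [CommRing R] [Fintype ι] [Fintype κ] [DecidableEq κ]

/-- The minimiser `u = K x` of `½ uᵀ E u + (γ/2) (A x + B u)ᵀ P (A x + B u)`. -/
noncomputable def feedbackGain (γ : R) (A : Matrix ι ι R) (B : Matrix ι κ R) (E : Matrix κ κ R)
    (P : Matrix ι ι R) : Matrix κ ι R :=
  -(γ • ((E + γ • (Bᵀ * P * B))⁻¹ * (Bᵀ * P * A)))

theorem mul_feedbackGain {γ : R} {A : Matrix ι ι R} {B : Matrix ι κ R} {E : Matrix κ κ R}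
    {P : Matrix ι ι R} (h : IsUnit (E + γ • (Bᵀ * P * B)).det) :
    (E + γ • (Bᵀ * P * B)) * feedbackGain γ A B E P = -(γ • (Bᵀ * P * A)) := by
  rw [feedbackGain, Matrix.mul_neg, Matrix.mul_smul, ← Matrix.mul_assoc, mul_nonsing_inv _ h,
    Matrix.one_mul]

theorem feedbackGain_sub_feedbackGain {γ : R} {A : Matrix ι ι R} {B : Matrix ι κ R}
    {E₁ E₂ : Matrix κ κ R} {P₁ P₂ : Matrix ι ι R}
    (h₁ : IsUnit (E₁ + γ • (Bᵀ * P₁ * B)).det) (h₂ : IsUnit (E₂ + γ • (Bᵀ * P₂ * B)).det) :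
    feedbackGain γ A B E₁ P₁ - feedbackGain γ A B E₂ P₂ =
      (E₂ + γ • (Bᵀ * P₂ * B))⁻¹ * ((E₂ - E₁) * feedbackGain γ A B E₁ P₁ +
        γ • (Bᵀ * (P₂ - P₁) * (A + B * feedbackGain γ A B E₁ P₁))) := by
  set K₁ := feedbackGain γ A B E₁ P₁
  rw [← Matrix.one_mul (K₁ - _), ← nonsing_inv_mul _ h₂, Matrix.mul_assoc, Matrix.mul_sub,
    mul_feedbackGain h₂]
  congr 1
  have hG₂K₁ : (E₂ + γ • (Bᵀ * P₂ * B)) * K₁ =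
      (E₂ - E₁) * K₁ + γ • (Bᵀ * (P₂ - P₁) * B * K₁) + (E₁ + γ • (Bᵀ * P₁ * B)) * K₁ := by
    simp only [Matrix.add_mul, Matrix.sub_mul, Matrix.mul_sub, Matrix.smul_mul, smul_sub]
    abel
  rw [hG₂K₁, mul_feedbackGain h₁]
  simp only [Matrix.mul_add, Matrix.sub_mul, Matrix.mul_sub, smul_sub, smul_add, Matrix.mul_assoc]
  abel

end FeedbackGain

section Coercive

variable {ι : Type*} [Fintype ι] [DecidableEq ι]

theorem dotProduct_mulVec_le_norm_mul (M : Matrix ι ι ℝ) (x : ι → ℝ) :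
    x ⬝ᵥ M *ᵥ x ≤ ‖M‖ * (x ⬝ᵥ x) := by
  set y := WithLp.toLp 2 x
  calc x ⬝ᵥ M *ᵥ x = ⟪y, toEuclideanCLM (𝕜 := ℝ) M y⟫ := (inner_toEuclideanCLM M y y).symm
    _ ≤ ‖y‖ * (‖M‖ * ‖y‖) := (real_inner_le_norm _ _).trans <|
        mul_le_mul_of_nonneg_left ((toEuclideanCLM (𝕜 := ℝ) M).le_opNorm y) (norm_nonneg y)
    _ = ‖M‖ * (x ⬝ᵥ x) := by rw [← EuclideanSpace.norm_sq_eq_dotProduct y]; ring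

theorem isUnit_det_of_coercive {G : Matrix ι ι ℝ} {c : ℝ} (hc : 0 < c)
    (hG : ∀ x, c * (x ⬝ᵥ x) ≤ x ⬝ᵥ G *ᵥ x) : IsUnit G.det := by
  refine isUnit_iff_ne_zero.mpr fun hdet => ?_
  obtain ⟨v, hv, hGv⟩ := exists_mulVec_eq_zero_iff.mpr hdet
  have hcv := hG v
  rw [hGv, dotProduct_zero] at hcv
  exact hv <| dotProduct_self_eq_zero.mp <|
    le_antisymm (nonpos_of_mul_nonpos_right hcv hc) (dotProduct_self_star_nonneg v)

theorem mul_norm_le_norm_toEuclideanCLM_of_coercive {G : Matrix ι ι ℝ} {c : ℝ}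
    (hG : ∀ x, c * (x ⬝ᵥ x) ≤ x ⬝ᵥ G *ᵥ x) (x : EuclideanSpace ℝ ι) :
    c * ‖x‖ ≤ ‖toEuclideanCLM (𝕜 := ℝ) G x‖ := by
  have h : c * ‖x‖ ^ 2 ≤ ‖x‖ * ‖toEuclideanCLM (𝕜 := ℝ) G x‖ :=
    calc c * ‖x‖ ^ 2 ≤ ⟪x, toEuclideanCLM (𝕜 := ℝ) G x⟫ := by
          rw [inner_toEuclideanCLM, EuclideanSpace.norm_sq_eq_dotProduct]
          exact hG _
      _ ≤ _ := real_inner_le_norm _ _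
  rcases (norm_nonneg x).eq_or_lt with hx | hx
  · rw [← hx, mul_zero]
    exact norm_nonneg _
  · nlinarith

theorem l2_opNorm_nonsing_inv_le_of_coercive {G : Matrix ι ι ℝ} {c : ℝ} (hc : 0 < c)
    (hG : ∀ x, c * (x ⬝ᵥ x) ≤ x ⬝ᵥ G *ᵥ x) : ‖G⁻¹‖ ≤ c⁻¹ := by
  rw [cstar_norm_def]
  refine ContinuousLinearMap.opNorm_le_bound _ (by positivity) fun y => ?_
  have hGG : toEuclideanCLM (𝕜 := ℝ) G (toEuclideanCLM (𝕜 := ℝ) G⁻¹ y) = y := by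
    ext1
    simp [mulVec_mulVec, mul_nonsing_inv _ (isUnit_det_of_coercive hc hG)]
  have h := mul_norm_le_norm_toEuclideanCLM_of_coercive hG (toEuclideanCLM (𝕜 := ℝ) G⁻¹ y)
  rw [hGG] at h
  rwa [inv_mul_eq_div, le_div_iff₀' hc]

end Coercive

section LamMin

variable {k : ℕ}

theorem IsHermitian.lamMin_mul_dotProduct_self_le {M : Matrix (Fin k) (Fin k) ℝ}
    (hM : M.IsHermitian) (x : Fin k → ℝ) : lamMin M * (x ⬝ᵥ x) ≤ x ⬝ᵥ M *ᵥ x := by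
  have hle : algebraMap ℝ _ (lamMin M) ≤ M :=
    (algebraMap_le_iff_le_spectrum hM).mpr fun _ hμ => csInf_le (finite_spectrum M).bddBelow hμ
  simpa [sub_mulVec, Algebra.algebraMap_eq_smul_one, smul_mulVec] using
    (le_iff.mp hle).dotProduct_mulVec_nonneg x

theorem PosDef.lamMin_pos [Nonempty (Fin k)] {M : Matrix (Fin k) (Fin k) ℝ} (hM : M.PosDef) :
    0 < lamMin M := by
  obtain ⟨i, hi⟩ := (Set.range_nonempty hM.1.eigenvalues).csInf_mem (Set.finite_range _)
  rw [lamMin, hM.isHermitian.spectrum_real_eq_range_eigenvalues, ← hi]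
  exact hM.eigenvalues_pos i

theorem IsHermitian.lamMin_sub_mul_dotProduct_self_le {E E' Q : Matrix (Fin k) (Fin k) ℝ} {η : ℝ}
    (hE : E.IsHermitian) (hEE' : ‖E - E'‖ ≤ η) (hQ : Q.PosSemidef) (x : Fin k → ℝ) :
    (lamMin E - η) * (x ⬝ᵥ x) ≤ x ⬝ᵥ (E' + Q) *ᵥ x := by
  have hlam := hE.lamMin_mul_dotProduct_self_le x
  have hdiff := dotProduct_mulVec_le_norm_mul (E - E') x
  have hQx : 0 ≤ x ⬝ᵥ Q *ᵥ x := by simpa using hQ.dotProduct_mulVec_nonneg x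
  have hx : 0 ≤ x ⬝ᵥ x := dotProduct_self_star_nonneg x
  rw [sub_mulVec, dotProduct_sub] at hdiff
  rw [add_mulVec, dotProduct_add]
  nlinarith

end LamMin

theorem PosSemidef.smul_transpose_mul_mul_same {ι κ : Type*} [Fintype ι] [Fintype κ]
    {P : Matrix ι ι ℝ} (hP : P.PosSemidef) (B : Matrix ι κ ℝ) {γ : ℝ} (hγ : 0 ≤ γ) :
    (γ • (Bᵀ * P * B)).PosSemidef := by
  simpa using (hP.conjTranspose_mul_mul_same B).smul hγ

theorem norm_feedbackGain_sub_le {ι κ : Type*} [Fintype ι] [Fintype κ] [DecidableEq ι]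
    [DecidableEq κ] {γ c : ℝ} (hγ : 0 ≤ γ) (hc : 0 < c) {A P₁ P₂ : Matrix ι ι ℝ}
    {B : Matrix ι κ ℝ} {E₁ E₂ : Matrix κ κ ℝ} (h₁ : IsUnit (E₁ + γ • (Bᵀ * P₁ * B)).det)
    (h₂ : ∀ x, c * (x ⬝ᵥ x) ≤ x ⬝ᵥ (E₂ + γ • (Bᵀ * P₂ * B)) *ᵥ x) :
    ‖feedbackGain γ A B E₁ P₁ - feedbackGain γ A B E₂ P₂‖ ≤
      c⁻¹ * (‖E₁ - E₂‖ * ‖feedbackGain γ A B E₁ P₁‖ +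
        γ * (‖P₁ - P₂‖ * (max ‖A‖ ‖B‖ ^ 2 * (‖feedbackGain γ A B E₁ P₁‖ + 1)))) := by
  set K₁ := feedbackGain γ A B E₁ P₁
  have hBt : ‖Bᵀ‖ = ‖B‖ := by
    rw [← conjTranspose_eq_transpose_of_trivial, l2_opNorm_conjTranspose]
  have hΔE : ‖(E₂ - E₁) * K₁‖ ≤ ‖E₁ - E₂‖ * ‖K₁‖ := norm_sub_rev E₁ E₂ ▸ l2_opNorm_mul _ _
  have hΔP : ‖Bᵀ * (P₂ - P₁) * (A + B * K₁)‖ ≤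
      ‖P₁ - P₂‖ * (max ‖A‖ ‖B‖ ^ 2 * (‖K₁‖ + 1)) :=
    calc ‖Bᵀ * (P₂ - P₁) * (A + B * K₁)‖ ≤ ‖Bᵀ‖ * ‖P₂ - P₁‖ * ‖A + B * K₁‖ :=
          (l2_opNorm_mul _ _).trans (by gcongr; exact l2_opNorm_mul _ _)
      _ ≤ ‖P₁ - P₂‖ * (‖B‖ * (‖A‖ + ‖B‖ * ‖K₁‖)) := by
          rw [hBt, norm_sub_rev P₂, mul_comm ‖B‖, mul_assoc]
          gcongr
          exact (norm_add_le _ _).trans (by gcongr; exact l2_opNorm_mul _ _)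
      _ ≤ _ := mul_le_mul_of_nonneg_left
          (mul_add_mul_le_max_sq_mul (norm_nonneg A) (norm_nonneg B) (norm_nonneg K₁))
          (norm_nonneg _)
  rw [feedbackGain_sub_feedbackGain h₁ (isUnit_det_of_coercive hc h₂)]
  refine (l2_opNorm_mul _ _).trans (mul_le_mul (l2_opNorm_nonsing_inv_le_of_coercive hc h₂) ?_
    (norm_nonneg _) (by positivity))
  refine (norm_add_le _ _).trans ?_
  rw [norm_smul, Real.norm_of_nonneg hγ]
  gcongr

end Matrix

theorem gain_perturbation_bound_general {n m : ℕ}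
    (A : Matrix (Fin n) (Fin n) ℝ) (B : Matrix (Fin n) (Fin m) ℝ)
    (γ : ℝ) (hγ0 : 0 < γ)
    (E₁ E₂ : Matrix (Fin m) (Fin m) ℝ) (hE₁ : E₁.PosDef)
    (P₁ P₂ : Matrix (Fin n) (Fin n) ℝ) (hP₁ : P₁.PosSemidef) (hP₂ : P₂.PosSemidef)
    (K₁ K₂ : Matrix (Fin m) (Fin n) ℝ)
    (hK₁ : K₁ = -(γ • ((E₁ + γ • (Bᵀ * P₁ * B))⁻¹ * (Bᵀ * P₁ * A))))
    (hK₂ : K₂ = -(γ • ((E₂ + γ • (Bᵀ * P₂ * B))⁻¹ * (Bᵀ * P₂ * A))))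
    (ε δ : ℝ) (hE : specNorm (E₁ - E₂) ≤ ε) (hε : ε ≤ lamMin E₁ / 2)
    (hP : specNorm (P₁ - P₂) ≤ δ) :
    specNorm (K₁ - K₂) ≤
      2 * γ / lamMin E₁ * max (specNorm A) (specNorm B) ^ 2 * (specNorm K₁ + 1) * δ +
        2 / lamMin E₁ * specNorm K₁ * ε := by
  simp only [specNorm_eq_norm] at hE hP ⊢
  have hε₀ : 0 ≤ ε := (norm_nonneg _).trans hE
  have hδ : 0 ≤ δ := (norm_nonneg _).trans hP
  rcases isEmpty_or_nonempty (Fin m) with hm | hm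
  · rw [Subsingleton.elim (K₁ - K₂) 0, norm_zero]
    have : 0 ≤ lamMin E₁ := by linarith
    positivity
  have hlam : 0 < lamMin E₁ := hE₁.lamMin_pos
  have h₁ : IsUnit (E₁ + γ • (Bᵀ * P₁ * B)).det :=
    (hE₁.add_posSemidef (hP₁.smul_transpose_mul_mul_same B hγ0.le)).det_pos.ne'.isUnit
  have h₂ := hE₁.isHermitian.lamMin_sub_mul_dotProduct_self_le hE
    (hP₂.smul_transpose_mul_mul_same B hγ0.le)
  have hinv : (lamMin E₁ - ε)⁻¹ ≤ 2 / lamMin E₁ := by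
    rw [← inv_div]
    exact inv_anti₀ (by positivity) (by linarith)
  calc ‖K₁ - K₂‖ ≤ (lamMin E₁ - ε)⁻¹ *
        (‖E₁ - E₂‖ * ‖K₁‖ + γ * (‖P₁ - P₂‖ * (max ‖A‖ ‖B‖ ^ 2 * (‖K₁‖ + 1)))) := by
        subst hK₁ hK₂
        exact norm_feedbackGain_sub_le hγ0.le (by linarith) h₁ h₂
    _ ≤ 2 / lamMin E₁ * (ε * ‖K₁‖ + γ * (δ * (max ‖A‖ ‖B‖ ^ 2 * (‖K₁‖ + 1)))) := by gcongr
    _ = _ := by ring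

/-- Bound on the change of the LQG feedback gain under perturbations of the cost matrix `E`
and the Riccati solution `P`: if `‖E₁ − E₂‖ ≤ ε ≤ λ_min(E₁)/2` and `‖P₁ − P₂‖ ≤ δ`, then
`‖K₁ − K₂‖ ≤ (2γ/λ_min(E₁))·max{‖A‖,‖B‖}²·(‖K₁‖+1)·δ + (2/λ_min(E₁))·‖K₁‖·ε`. -/
theorem gain_perturbation_bound {n m : ℕ}
    (A : Matrix (Fin n) (Fin n) ℝ) (B : Matrix (Fin n) (Fin m) ℝ)
    (γ : ℝ) (hγ0 : 0 < γ) (hγ1 : γ ≤ 1)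
    (E₁ E₂ : Matrix (Fin m) (Fin m) ℝ) (hE₁ : E₁.PosDef) (hE₂ : E₂.PosDef)
    (P₁ P₂ : Matrix (Fin n) (Fin n) ℝ) (hP₁ : P₁.PosSemidef) (hP₂ : P₂.PosSemidef)
    (K₁ K₂ : Matrix (Fin m) (Fin n) ℝ)
    (hK₁ : K₁ = -(γ • ((E₁ + γ • (Bᵀ * P₁ * B))⁻¹ * (Bᵀ * P₁ * A))))
    (hK₂ : K₂ = -(γ • ((E₂ + γ • (Bᵀ * P₂ * B))⁻¹ * (Bᵀ * P₂ * A))))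
    (ε δ : ℝ) (hE : specNorm (E₁ - E₂) ≤ ε) (hε : ε ≤ lamMin E₁ / 2)
    (hP : specNorm (P₁ - P₂) ≤ δ) :
    specNorm (K₁ - K₂) ≤
      2 * γ / lamMin E₁ * max (specNorm A) (specNorm B) ^ 2 * (specNorm K₁ + 1) * δ +
        2 / lamMin E₁ * specNorm K₁ * ε :=
  gain_perturbation_bound_general A B γ hγ0 E₁ E₂ hE₁ P₁ P₂ hP₁ hP₂ K₁ K₂ hK₁ hK₂ ε δ hE hε hP
end

section
/- Let B ∈ ℝ^{n×m}, γ ∈ (0,1]. Let E*, E† ∈ ℝ^{m×m} be symmetric positive definite, P*, P† ∈ ℝ^{n×n} symmetric positive semi-definite, and h*, h† ∈ ℝ^n. Define k* = −(γ/2)·(E* + γ·Bᵀ·P*·B)^{-1}·Bᵀ·h* and k† = −(γ/2)·(E† + γ·Bᵀ·P†·B)^{-1}·Bᵀ·h†, i.e., k* (resp. k†) is the unique minimizer of k ↦ kᵀ(E* + γBᵀP*B)k + γ·(h*)ᵀBk (resp. with daggered quantities). Suppose ‖E† − E*‖ ≤ λ_min(E*)/2. Then ‖k† − k*‖ ≤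 Γ₇·‖E† − E*‖ + Γ₈·‖P† − P*‖ + Γ₉·‖h† − h*‖, where Γ₇ = (4/λ_min(E*))·‖k*‖, Γ₈ = (4γ/λ_min(E*))·‖k*‖·‖B‖², and Γ₉ = (4γ/λ_min(E*))·‖B‖. -/
/-!
Write `M = E + γ BᵀPB`, so that `M k = -(γ/2) Bᵀh` for both parameter sets, and hence
`M† (k† - k*) = -(γ/2) Bᵀ (h† - h*) - (M† - M*) k*`,
with `‖M† - M*‖ ≤ ‖E† - E*‖ + γ ‖B‖² ‖P† - P*‖`.
Since `BᵀP†B ⪰ 0` and `E* ⪰ λ_min(E*)`, the quadratic form of `M†` is at least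
`(λ_min(E*) - ‖E† - E*‖) ‖v‖² ≥ λ_min(E*)/2 ‖v‖²`, and by Cauchy–Schwarz this coercivity gives
`λ_min(E*)/2 ‖v‖ ≤ ‖M† v‖`. Together these yield the bound, even with `2` in place of `4`.
-/

open Matrix

/-- The Euclidean norm of a real vector. -/
noncomputable def vecNorm {n : ℕ} (v : Fin n → ℝ) : ℝ :=
  ‖(EuclideanSpace.equiv (Fin n) ℝ).symm v‖

open scoped MatrixOrder Matrix.Norms.L2Operator

section Norms

variable {m n : ℕ}

lemma specNorm_eq_l2_opNorm (M : Matrix (Fin m) (Fin n) ℝ) : specNorm M = ‖M‖ := rfl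

lemma vecNorm_eq_norm_toLp (v : Fin n → ℝ) : vecNorm v = ‖WithLp.toLp 2 v‖ := rfl

lemma specNorm_nonneg (M : Matrix (Fin m) (Fin n) ℝ) : 0 ≤ specNorm M := norm_nonneg M

lemma vecNorm_nonneg (v : Fin n → ℝ) : 0 ≤ vecNorm v := norm_nonneg _

lemma specNorm_transpose (M : Matrix (Fin m) (Fin n) ℝ) : specNorm Mᵀ = specNorm M := by
  have := l2_opNorm_conjTranspose M
  rwa [conjTranspose_eq_transpose_of_trivial] at this

lemma vecNorm_mulVec_le (M : Matrix (Fin m) (Fin n) ℝ) (v : Fin n → ℝ) :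
    vecNorm (M *ᵥ v) ≤ specNorm M * vecNorm v :=
  l2_opNorm_mulVec M (WithLp.toLp 2 v)

lemma vecNorm_sub_le (u v : Fin n → ℝ) : vecNorm (u - v) ≤ vecNorm u + vecNorm v := by
  simpa only [vecNorm_eq_norm_toLp, WithLp.toLp_sub] using norm_sub_le _ _

lemma vecNorm_zero : vecNorm (0 : Fin n → ℝ) = 0 := norm_zero

lemma vecNorm_neg (v : Fin n → ℝ) : vecNorm (-v) = vecNorm v := norm_neg (WithLp.toLp 2 v)

lemma vecNorm_smul (c : ℝ) (v : Fin n → ℝ) : vecNorm (c • v) = |c| * vecNorm v := by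
  simp only [vecNorm_eq_norm_toLp, WithLp.toLp_smul, norm_smul, Real.norm_eq_abs]

lemma vecNorm_sq (v : Fin n → ℝ) : vecNorm v ^ 2 = v ⬝ᵥ v := by
  rw [vecNorm_eq_norm_toLp, ← real_inner_self_eq_norm_sq, EuclideanSpace.inner_toLp_toLp]
  rfl

lemma abs_dotProduct_le (u v : Fin n → ℝ) : |u ⬝ᵥ v| ≤ vecNorm u * vecNorm v := by
  have := abs_real_inner_le_norm (WithLp.toLp 2 u) (WithLp.toLp 2 v)
  rwa [EuclideanSpace.inner_toLp_toLp, star_trivial, dotProduct_comm] at this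

end Norms

section QuadraticForms

variable {k : ℕ}

lemma lamMin_mul_vecNorm_sq_le {A : Matrix (Fin k) (Fin k) ℝ} (hA : A.IsHermitian)
    (v : Fin k → ℝ) : lamMin A * vecNorm v ^ 2 ≤ v ⬝ᵥ A *ᵥ v := by
  have hle : algebraMap ℝ _ (lamMin A) ≤ A :=
    (algebraMap_le_iff_le_spectrum hA.isSelfAdjoint).mpr
      fun _ hx => csInf_le A.finite_real_spectrum.bddBelow hx
  have := (le_iff.mp hle).dotProduct_mulVec_nonneg v
  rwa [Algebra.algebraMap_eq_smul_one, sub_mulVec, smul_mulVec, one_mulVec, dotProduct_sub,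
    dotProduct_smul, smul_eq_mul, star_trivial, ← vecNorm_sq, sub_nonneg] at this

lemma Matrix.PosDef.lamMin_pos_s10 [Nonempty (Fin k)] {A : Matrix (Fin k) (Fin k) ℝ}
    (hA : A.PosDef) : 0 < lamMin A := by
  have hspec := hA.isHermitian.spectrum_real_eq_range_eigenvalues
  have hmem : lamMin A ∈ spectrum ℝ A :=
    (hspec ▸ Set.range_nonempty _ : (spectrum ℝ A).Nonempty).csInf_mem A.finite_real_spectrum
  obtain ⟨i, hi⟩ := hspec ▸ hmem
  exact hi ▸ hA.eigenvalues_pos i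

lemma abs_dotProduct_mulVec_le (A : Matrix (Fin k) (Fin k) ℝ) (v : Fin k → ℝ) :
    |v ⬝ᵥ A *ᵥ v| ≤ specNorm A * vecNorm v ^ 2 := by
  calc |v ⬝ᵥ A *ᵥ v| ≤ vecNorm v * vecNorm (A *ᵥ v) := abs_dotProduct_le v _
    _ ≤ vecNorm v * (specNorm A * vecNorm v) := by
      gcongr
      · exact vecNorm_nonneg v
      · exact vecNorm_mulVec_le A v
    _ = specNorm A * vecNorm v ^ 2 := by ring

lemma mul_vecNorm_le_vecNorm_mulVec {A : Matrix (Fin k) (Fin k) ℝ} {c : ℝ}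
    (hA : ∀ v, c * vecNorm v ^ 2 ≤ v ⬝ᵥ A *ᵥ v) (v : Fin k → ℝ) :
    c * vecNorm v ≤ vecNorm (A *ᵥ v) := by
  rcases (vecNorm_nonneg v).eq_or_lt with hv | hv
  · rw [← hv, mul_zero]
    exact vecNorm_nonneg _
  · refine le_of_mul_le_mul_right ?_ hv
    calc c * vecNorm v * vecNorm v ≤ v ⬝ᵥ A *ᵥ v := by nlinarith [hA v]
      _ ≤ |v ⬝ᵥ A *ᵥ v| := le_abs_self _
      _ ≤ vecNorm v * vecNorm (A *ᵥ v) := abs_dotProduct_le v _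
      _ = vecNorm (A *ᵥ v) * vecNorm v := mul_comm _ _

end QuadraticForms

section LinearSystems

variable {ι R : Type*} [Fintype ι] [CommRing R]

lemma mulVec_nonsing_inv_mulVec [DecidableEq ι] {M : Matrix ι ι R} (hM : IsUnit M)
    (v : ι → R) : M *ᵥ (M⁻¹ *ᵥ v) = v := by
  rw [mulVec_mulVec, mul_nonsing_inv M ((isUnit_iff_isUnit_det M).mp hM), one_mulVec]

lemma mulVec_sub_of_mulVec_eq {M M' : Matrix ι ι R} {x x' b b' : ι → R}
    (h : M *ᵥ x = b) (h' : M' *ᵥ x' = b') : M' *ᵥ (x' - x) = (b' - b) - (M' - M) *ᵥ x := by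
  rw [mulVec_sub, sub_mulVec, h, h']
  abel

end LinearSystems

lemma mul_vecNorm_sub_le_of_mulVec_eq {k : ℕ} {M M' : Matrix (Fin k) (Fin k) ℝ}
    {x x' b b' : Fin k → ℝ} {c : ℝ} (hM' : ∀ v, c * vecNorm v ^ 2 ≤ v ⬝ᵥ M' *ᵥ v)
    (h : M *ᵥ x = b) (h' : M' *ᵥ x' = b') :
    c * vecNorm (x' - x) ≤ vecNorm (b' - b) + specNorm (M' - M) * vecNorm x :=
  calc c * vecNorm (x' - x) ≤ vecNorm (M' *ᵥ (x' - x)) := mul_vecNorm_le_vecNorm_mulVec hM' _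
    _ ≤ vecNorm (b' - b) + vecNorm ((M' - M) *ᵥ x) := by
      rw [mulVec_sub_of_mulVec_eq h h']
      exact vecNorm_sub_le _ _
    _ ≤ vecNorm (b' - b) + specNorm (M' - M) * vecNorm x := by
      gcongr
      exact vecNorm_mulVec_le _ _

section AffineTerm

variable {n m : ℕ} (B : Matrix (Fin n) (Fin m) ℝ) {γ : ℝ}

lemma Matrix.PosSemidef.smul_transpose_mul_mul {P : Matrix (Fin n) (Fin n) ℝ}
    (hP : P.PosSemidef) (hγ : 0 ≤ γ) : (γ • (Bᵀ * P * B)).PosSemidef := by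
  have := hP.conjTranspose_mul_mul_same B
  rw [conjTranspose_eq_transpose_of_trivial] at this
  exact this.smul hγ

lemma mulVec_affineTerm {E : Matrix (Fin m) (Fin m) ℝ} {P : Matrix (Fin n) (Fin n) ℝ}
    (hE : E.PosDef) (hP : P.PosSemidef) (hγ : 0 ≤ γ) (h : Fin n → ℝ) :
    (E + γ • (Bᵀ * P * B)) *ᵥ -((γ / 2) • ((E + γ • (Bᵀ * P * B))⁻¹ *ᵥ (Bᵀ *ᵥ h))) =
      -((γ / 2) • (Bᵀ *ᵥ h)) := by
  rw [mulVec_neg, mulVec_smul,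
    mulVec_nonsing_inv_mulVec (hE.add_posSemidef (hP.smul_transpose_mul_mul B hγ)).isUnit]

lemma lamMin_sub_specNorm_mul_vecNorm_sq_le {E E' : Matrix (Fin m) (Fin m) ℝ}
    {P' : Matrix (Fin n) (Fin n) ℝ} (hE : E.IsHermitian) (hP' : P'.PosSemidef) (hγ : 0 ≤ γ)
    (v : Fin m → ℝ) :
    (lamMin E - specNorm (E' - E)) * vecNorm v ^ 2 ≤ v ⬝ᵥ (E' + γ • (Bᵀ * P' * B)) *ᵥ v := by
  have hE_form := lamMin_mul_vecNorm_sq_le hE v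
  have hΔ_form := (abs_le.mp (abs_dotProduct_mulVec_le (E' - E) v)).1
  have hP'_form := (hP'.smul_transpose_mul_mul B hγ).dotProduct_mulVec_nonneg v
  rw [star_trivial] at hP'_form
  rw [sub_mulVec, dotProduct_sub] at hΔ_form
  rw [add_mulVec, dotProduct_add]
  linarith

lemma specNorm_add_smul_transpose_mul_mul_sub_le {E E' : Matrix (Fin m) (Fin m) ℝ}
    {P P' : Matrix (Fin n) (Fin n) ℝ} (hγ : 0 ≤ γ) :
    specNorm (E' + γ • (Bᵀ * P' * B) - (E + γ • (Bᵀ * P * B))) ≤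
      specNorm (E' - E) + γ * specNorm B ^ 2 * specNorm (P' - P) := by
  have hsplit : E' + γ • (Bᵀ * P' * B) - (E + γ • (Bᵀ * P * B)) =
      (E' - E) + γ • (Bᵀ * (P' - P) * B) := by
    simp only [Matrix.mul_sub, Matrix.sub_mul, smul_sub]
    abel
  simp only [hsplit, specNorm_eq_l2_opNorm]
  calc ‖E' - E + γ • (Bᵀ * (P' - P) * B)‖ ≤ ‖E' - E‖ + γ * ‖Bᵀ * (P' - P) * B‖ := by
        grw [norm_add_le, norm_smul, Real.norm_of_nonneg hγ]
    _ ≤ ‖E' - E‖ + γ * (‖Bᵀ‖ * ‖P' - P‖ * ‖B‖) := by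
        gcongr
        grw [l2_opNorm_mul, l2_opNorm_mul]
    _ = ‖E' - E‖ + γ * ‖B‖ ^ 2 * ‖P' - P‖ := by
        rw [← specNorm_eq_l2_opNorm Bᵀ, specNorm_transpose, specNorm_eq_l2_opNorm]
        ring

lemma vecNorm_neg_smul_transpose_mulVec_sub_le (hγ : 0 ≤ γ) (h h' : Fin n → ℝ) :
    vecNorm (-((γ / 2) • (Bᵀ *ᵥ h')) - -((γ / 2) • (Bᵀ *ᵥ h))) ≤
      γ / 2 * (specNorm B * vecNorm (h' - h)) := by
  rw [← neg_sub', ← smul_sub, ← mulVec_sub, vecNorm_neg, vecNorm_smul,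
    abs_of_nonneg (by linarith), ← specNorm_transpose B]
  gcongr
  exact vecNorm_mulVec_le _ _

lemma mul_vecNorm_affineTerm_sub_le {E E' : Matrix (Fin m) (Fin m) ℝ}
    {P P' : Matrix (Fin n) (Fin n) ℝ} {h h' : Fin n → ℝ} {k k' : Fin m → ℝ} {c : ℝ}
    (hE : E.PosDef) (hE' : E'.PosDef) (hP : P.PosSemidef) (hP' : P'.PosSemidef) (hγ : 0 ≤ γ)
    (hk : k = -((γ / 2) • ((E + γ • (Bᵀ * P * B))⁻¹ *ᵥ (Bᵀ *ᵥ h))))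
    (hk' : k' = -((γ / 2) • ((E' + γ • (Bᵀ * P' * B))⁻¹ *ᵥ (Bᵀ *ᵥ h'))))
    (hc : ∀ v, c * vecNorm v ^ 2 ≤ v ⬝ᵥ (E' + γ • (Bᵀ * P' * B)) *ᵥ v) :
    c * vecNorm (k' - k) ≤ γ / 2 * (specNorm B * vecNorm (h' - h)) +
      (specNorm (E' - E) + γ * specNorm B ^ 2 * specNorm (P' - P)) * vecNorm k :=
  (mul_vecNorm_sub_le_of_mulVec_eq hc (hk ▸ mulVec_affineTerm B hE hP hγ h)
    (hk' ▸ mulVec_affineTerm B hE' hP' hγ h')).trans <| add_le_add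
      (vecNorm_neg_smul_transpose_mulVec_sub_le B hγ h h')
      (mul_le_mul_of_nonneg_right (specNorm_add_smul_transpose_mul_mul_sub_le B hγ)
        (vecNorm_nonneg k))

end AffineTerm

theorem affine_term_perturbation_bound_general {n m : ℕ}
    (B : Matrix (Fin n) (Fin m) ℝ) (γ : ℝ) (hγ0 : 0 < γ)
    (Estar Edag : Matrix (Fin m) (Fin m) ℝ) (hEstar : Estar.PosDef) (hEdag : Edag.PosDef)
    (Pstar Pdag : Matrix (Fin n) (Fin n) ℝ) (hPstar : Pstar.PosSemidef)
    (hPdag : Pdag.PosSemidef)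
    (hstar hdag : Fin n → ℝ) (kstar kdag : Fin m → ℝ)
    (hkstar : kstar = -((γ / 2) • ((Estar + γ • (Bᵀ * Pstar * B))⁻¹.mulVec (Bᵀ.mulVec hstar))))
    (hkdag : kdag = -((γ / 2) • ((Edag + γ • (Bᵀ * Pdag * B))⁻¹.mulVec (Bᵀ.mulVec hdag))))
    (hE : specNorm (Edag - Estar) ≤ lamMin Estar / 2) :
    vecNorm (kdag - kstar) ≤
      4 / lamMin Estar * vecNorm kstar * specNorm (Edag - Estar) +
        4 * γ / lamMin Estar * vecNorm kstar * specNorm B ^ 2 * specNorm (Pdag - Pstar) +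
          4 * γ / lamMin Estar * specNorm B * vecNorm (hdag - hstar) := by
  have hk := vecNorm_nonneg kstar
  have hΔh := vecNorm_nonneg (hdag - hstar)
  have hB := specNorm_nonneg B
  have hΔP := specNorm_nonneg (Pdag - Pstar)
  have hΔE := specNorm_nonneg (Edag - Estar)
  rcases isEmpty_or_nonempty (Fin m) with hm | hm
  · have : 0 ≤ lamMin Estar := hΔE.trans (hE.trans (by linarith))
    rw [Subsingleton.elim (kdag - kstar) 0, vecNorm_zero]
    positivity
  have hcoercive (v : Fin m → ℝ) :
      lamMin Estar / 2 * vecNorm v ^ 2 ≤ v ⬝ᵥ (Edag + γ • (Bᵀ * Pdag * B)) *ᵥ v :=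
    (mul_le_mul_of_nonneg_right (by linarith) (sq_nonneg _)).trans
      (lamMin_sub_specNorm_mul_vecNorm_sq_le B hEstar.isHermitian hPdag hγ0.le v)
  have hperturb := mul_vecNorm_affineTerm_sub_le B hEstar hEdag hPstar hPdag hγ0.le
    hkstar hkdag hcoercive
  have hkey : lamMin Estar * vecNorm (kdag - kstar) ≤ 4 * (vecNorm kstar * specNorm (Edag - Estar)
      + γ * vecNorm kstar * specNorm B ^ 2 * specNorm (Pdag - Pstar)
      + γ * specNorm B * vecNorm (hdag - hstar)) := by
    have hγBh : 0 ≤ γ * specNorm B * vecNorm (hdag - hstar) := by positivity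
    have hS : 0 ≤ vecNorm kstar * specNorm (Edag - Estar)
        + γ * vecNorm kstar * specNorm B ^ 2 * specNorm (Pdag - Pstar) := by positivity
    linear_combination 2 * hperturb + 2 * hS + 3 * hγBh
  have hlam := hEstar.lamMin_pos_s10
  calc vecNorm (kdag - kstar) = lamMin Estar * vecNorm (kdag - kstar) / lamMin Estar := by
        field_simp
    _ ≤ _ := div_le_div_of_nonneg_right hkey hlam.le
    _ = _ := by ring

/-- Bound on the change of the affine term `k` of the optimal policy:
if `‖E† − E*‖ ≤ λ_min(E*)/2` then `‖k† − k*‖ ≤ Γ₇‖E† − E*‖ + Γ₈‖P† − P*‖ + Γ₉‖h† − h*‖`,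
where `Γ₇ = (4/λ_min(E*))‖k*‖`, `Γ₈ = (4γ/λ_min(E*))‖k*‖‖B‖²`, and
`Γ₉ = (4γ/λ_min(E*))‖B‖`. -/
theorem affine_term_perturbation_bound {n m : ℕ}
    (B : Matrix (Fin n) (Fin m) ℝ) (γ : ℝ) (hγ0 : 0 < γ) (hγ1 : γ ≤ 1)
    (Estar Edag : Matrix (Fin m) (Fin m) ℝ) (hEstar : Estar.PosDef) (hEdag : Edag.PosDef)
    (Pstar Pdag : Matrix (Fin n) (Fin n) ℝ) (hPstar : Pstar.PosSemidef)
    (hPdag : Pdag.PosSemidef)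
    (hstar hdag : Fin n → ℝ) (kstar kdag : Fin m → ℝ)
    (hkstar : kstar = -((γ / 2) • ((Estar + γ • (Bᵀ * Pstar * B))⁻¹.mulVec (Bᵀ.mulVec hstar))))
    (hkdag : kdag = -((γ / 2) • ((Edag + γ • (Bᵀ * Pdag * B))⁻¹.mulVec (Bᵀ.mulVec hdag))))
    (hE : specNorm (Edag - Estar) ≤ lamMin Estar / 2) :
    vecNorm (kdag - kstar) ≤
      4 / lamMin Estar * vecNorm kstar * specNorm (Edag - Estar) +
        4 * γ / lamMin Estar * vecNorm kstar * specNorm B ^ 2 * specNorm (Pdag - Pstar) +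
          4 * γ / lamMin Estar * specNorm B * vecNorm (hdag - hstar) :=
  affine_term_perturbation_bound_general B γ hγ0 Estar Edag hEstar hEdag Pstar Pdag hPstar hPdag
    hstar hdag kstar kdag hkstar hkdag hE
end
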